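/- Let $K$ be an $l \times l$ matrix over $\mathbb{F}_2$, $0 \le i < l$, $u \in \mathbb{F}_2^i$, and $a, b : \mathrm{Fin}\ l \to \mathbb{R}$. For $c \in \mathbb{F}_2^l$ define $L(c) = \sum_j(\text{if } c_j = 0 \text{ then } a_j \text{ else } b_j)$ and $Q(c) = \sum_j \varepsilon(c_j)(a_j - b_j)$ with $\varepsilon(0)=1$, $\varepsilon(1)=-1$. Then $\max_{v \in \mathbb{F}_2^{l-i-1}} L((u \bullet 0 \bullet v)K) - \max_{v \in \mathbb{F}_2^{l-i-1}} L((u \bullet 1 \bullet v)K) = \tfrac{1}{2}\left(\max_{c \in D_0} Q(c) - \max_{c \in D_1} Q(c)\right)$, where $D_\beta = \left(\sum_{j<i} u_j K_j + \beta K_i\right) + C_{i+1}$ for $\beta \in \{0,1\}$ and $C_{i+1}$ is the $\mathbb{F}_2$-span of rows $K_{i+1},\dots,K_{l-1}$. -/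
import Mathlib


/-- Concatenation `u • b • v` of `u ∈ 𝔽₂ⁱ`, a bit `b`, and `v ∈ 𝔽₂^{l-i-1}`
into a length-`l` vector. -/
def concatVec (l i : ℕ) (hi : i < l) (u : Fin i → ZMod 2) (b : ZMod 2)
    (v : Fin (l - i - 1) → ZMod 2) : Fin l → ZMod 2 :=
  fun j =>
    if h : (j : ℕ) < i then u ⟨j, h⟩
    else if h' : (j : ℕ) = i then b
    else v ⟨(j : ℕ) - i - 1, by have := j.isLt; omega⟩

/-- The log-likelihood sum `L(c) = ∑_j (if c_j = 0 then a_j else b_j)`. -/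
noncomputable def llSum (l : ℕ) (a b : Fin l → ℝ) (c : Fin l → ZMod 2) : ℝ :=
  ∑ j, if c j = 0 then a j else b j

/-- The sign `ε(0) = 1`, `ε(1) = -1`. -/
noncomputable def eps (x : ZMod 2) : ℝ := if x = 0 then 1 else -1

/-- The correlation `Q(c) = ∑_j ε(c_j) (a_j - b_j)`. -/
noncomputable def corr (l : ℕ) (a b : Fin l → ℝ) (c : Fin l → ZMod 2) : ℝ :=
  ∑ j, eps (c j) * (a j - b j)

/-- The affine coset `D_β = (∑_{j<i} u_j K_j + β K_i) + C_{i+1}`, where `C_{i+1}`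
is the span of the rows `K_{i+1}, …, K_{l-1}`. -/
def cosetD (l : ℕ) (K : Matrix (Fin l) (Fin l) (ZMod 2)) (i : ℕ) (hi : i < l)
    (u : Fin i → ZMod 2) (β : ZMod 2) : Set (Fin l → ZMod 2) :=
  (fun c => ((∑ j : Fin i, u j • K ⟨(j : ℕ), by omega⟩) + β • K ⟨i, hi⟩) + c) ''
    (Submodule.span (ZMod 2) {r : Fin l → ZMod 2 | ∃ j : Fin l, i < (j : ℕ) ∧ r = K j} :
      Set (Fin l → ZMod 2))

lemma my_sup'_div_add {α : Type*} (s : Finset α) (H : s.Nonempty) (f : α → ℝ) (c : ℝ) :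
    s.sup' H (fun x => f x / 2 + c) = s.sup' H f / 2 + c := by
  apply le_antisymm
  · apply Finset.sup'_le
    intro x hx
    have := Finset.le_sup' f hx
    linarith
  · obtain ⟨x, hx, hfx⟩ := Finset.exists_mem_eq_sup' H f
    rw [hfx]
    exact Finset.le_sup' (fun x => f x / 2 + c) hx

lemma my_llSum_eq (l : ℕ) (a b : Fin l → ℝ) (c : Fin l → ZMod 2) :
    llSum l a b c = corr l a b c / 2 + (∑ j, (a j + b j)) / 2 := by
  have h : ∀ j, (if c j = 0 then a j else b j)
      = eps (c j) * (a j - b j) / 2 + (a j + b j) / 2 := by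
    intro j
    unfold eps
    split_ifs <;> ring
  unfold llSum corr
  simp_rw [h]
  rw [Finset.sum_add_distrib, ← Finset.sum_div, ← Finset.sum_div]

lemma my_vecMul_smul (l : ℕ) (K : Matrix (Fin l) (Fin l) (ZMod 2)) (c : Fin l → ZMod 2) :
    Matrix.vecMul c K = ∑ k, c k • K k := by
  funext j
  simp [Matrix.vecMul, dotProduct, Finset.sum_apply]

lemma my_vecMul_concat (l : ℕ) (K : Matrix (Fin l) (Fin l) (ZMod 2)) (i : ℕ) (hi : i < l)
    (u : Fin i → ZMod 2) (β : ZMod 2) (v : Fin (l - i - 1) → ZMod 2) :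
    Matrix.vecMul (concatVec l i hi u β v) K =
      ((∑ j : Fin i, u j • K ⟨(j : ℕ), by omega⟩) + β • K ⟨i, hi⟩) +
        ∑ k : Fin (l - i - 1), v k • K ⟨i + 1 + (k : ℕ), by have := k.isLt; omega⟩ := by
  rw [my_vecMul_smul]
  rw [← Finset.sum_filter_add_sum_filter_not Finset.univ (fun j : Fin l => (j : ℕ) < i)]
  rw [← Finset.sum_filter_add_sum_filter_not
    (Finset.univ.filter (fun j : Fin l => ¬ (j : ℕ) < i)) (fun j : Fin l => (j : ℕ) = i)]
  have h1 : ∑ j ∈ Finset.univ.filter (fun j : Fin l => (j : ℕ) < i),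
      concatVec l i hi u β v j • K j = ∑ j : Fin i, u j • K ⟨(j : ℕ), by omega⟩ := by
    refine Finset.sum_bij' (fun j hj => (⟨(j : ℕ), by simpa using hj⟩ : Fin i))
      (fun j _ => (⟨(j : ℕ), by omega⟩ : Fin l)) (fun a ha => Finset.mem_univ _)
      ?_ ?_ ?_ ?_
    · intro a ha; simp [a.isLt]
    · intro a ha; rfl
    · intro a ha; rfl
    · intro a ha
      have hai : (a : ℕ) < i := by simpa using ha
      simp [concatVec, hai]
  have h2 : (Finset.univ.filter (fun j : Fin l => ¬ (j : ℕ) < i)).filter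
      (fun j : Fin l => (j : ℕ) = i) = {⟨i, hi⟩} := by
    ext j
    simp only [Finset.mem_filter, Finset.mem_univ, true_and, Finset.mem_singleton]
    constructor
    · rintro ⟨-, h⟩; exact Fin.ext h
    · rintro rfl; simp
  have h3 : ∑ j ∈ (Finset.univ.filter (fun j : Fin l => ¬ (j : ℕ) < i)).filter
        (fun j : Fin l => (j : ℕ) = i), concatVec l i hi u β v j • K j
      = β • K ⟨i, hi⟩ := by
    rw [h2, Finset.sum_singleton]
    simp [concatVec]
  have h4 : ∑ j ∈ (Finset.univ.filter (fun j : Fin l => ¬ (j : ℕ) < i)).filter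
        (fun j : Fin l => ¬ (j : ℕ) = i), concatVec l i hi u β v j • K j
      = ∑ k : Fin (l - i - 1), v k • K ⟨i + 1 + (k : ℕ), by have := k.isLt; omega⟩ := by
    refine Finset.sum_bij'
      (fun j hj => (⟨(j : ℕ) - i - 1, by
        simp only [Finset.mem_filter] at hj; have := j.isLt; omega⟩ : Fin (l - i - 1)))
      (fun k _ => (⟨i + 1 + (k : ℕ), by have := k.isLt; omega⟩ : Fin l))
      (fun a ha => Finset.mem_univ _) ?_ ?_ ?_ ?_
    · intro a ha
      simp only [Finset.mem_filter, Finset.mem_univ, true_and]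
      omega
    · intro a ha
      simp only [Finset.mem_filter] at ha
      apply Fin.ext
      simp only
      omega
    · intro a ha
      apply Fin.ext
      simp only
      omega
    · intro a ha
      simp only [Finset.mem_filter, Finset.mem_univ, true_and] at ha
      have h5 : ¬ (a : ℕ) < i := ha.1
      have h6 : ¬ (a : ℕ) = i := ha.2
      simp only [concatVec, h5, h6, dif_neg, dite_false]
      congr 1
      exact congrArg K (Fin.ext (by simp; omega))
  rw [h1, h3, h4]
  abel

lemma my_range_eq_coset (l : ℕ) (K : Matrix (Fin l) (Fin l) (ZMod 2)) (i : ℕ) (hi : i < l)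
    (u : Fin i → ZMod 2) (β : ZMod 2) :
    Set.range (fun v : Fin (l - i - 1) → ZMod 2 =>
      Matrix.vecMul (concatVec l i hi u β v) K) = cosetD l K i hi u β := by
  have hset : {r : Fin l → ZMod 2 | ∃ j : Fin l, i < (j : ℕ) ∧ r = K j}
      = Set.range (fun k : Fin (l - i - 1) =>
          K ⟨i + 1 + (k : ℕ), by have := k.isLt; omega⟩) := by
    ext r
    constructor
    · rintro ⟨j, hj, rfl⟩
      refine ⟨⟨(j : ℕ) - i - 1, by have := j.isLt; omega⟩, ?_⟩
      exact congrArg K (Fin.ext (by simp; omega))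
    · rintro ⟨k, rfl⟩
      exact ⟨⟨i + 1 + (k : ℕ), by have := k.isLt; omega⟩, by simp; omega, rfl⟩
  ext x
  simp only [cosetD, Set.mem_image, Set.mem_range, SetLike.mem_coe]
  constructor
  · rintro ⟨v, rfl⟩
    refine ⟨∑ k : Fin (l - i - 1), v k • K ⟨i + 1 + (k : ℕ), by have := k.isLt; omega⟩,
      ?_, ?_⟩
    · rw [hset]
      apply Submodule.sum_mem
      intro k _
      exact Submodule.smul_mem _ _ (Submodule.subset_span ⟨k, rfl⟩)
    · rw [my_vecMul_concat]
  · rintro ⟨c, hc, rfl⟩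
    rw [hset, Submodule.mem_span_range_iff_exists_fun] at hc
    obtain ⟨w, hw⟩ := hc
    exact ⟨w, by rw [my_vecMul_concat, hw]⟩

/-- The successive cancellation LLR of the min-sum decoder expressed via coset
correlation maxima:
`max_v L((u•0•v)K) - max_v L((u•1•v)K) = ½ (max_{c ∈ D₀} Q(c) - max_{c ∈ D₁} Q(c))`. -/
theorem sc_llr_eq_half_coset_corr_max_sub (l : ℕ)
    (K : Matrix (Fin l) (Fin l) (ZMod 2)) (i : ℕ) (hi : i < l)
    (u : Fin i → ZMod 2) (a b : Fin l → ℝ) :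
    (Finset.univ.sup' Finset.univ_nonempty
        (fun v : Fin (l - i - 1) → ZMod 2 =>
          llSum l a b (Matrix.vecMul (concatVec l i hi u 0 v) K))) -
      (Finset.univ.sup' Finset.univ_nonempty
        (fun v : Fin (l - i - 1) → ZMod 2 =>
          llSum l a b (Matrix.vecMul (concatVec l i hi u 1 v) K))) =
    (sSup (corr l a b '' cosetD l K i hi u 0) -
      sSup (corr l a b '' cosetD l K i hi u 1)) / 2 := by
  have key : ∀ β : ZMod 2,
      (Finset.univ.sup' Finset.univ_nonempty
        (fun v : Fin (l - i - 1) → ZMod 2 =>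
          llSum l a b (Matrix.vecMul (concatVec l i hi u β v) K))) =
      sSup (corr l a b '' cosetD l K i hi u β) / 2 + (∑ j, (a j + b j)) / 2 := by
    intro β
    rw [← my_range_eq_coset l K i hi u β]
    have h1 : corr l a b ''
        Set.range (fun v : Fin (l - i - 1) → ZMod 2 =>
          Matrix.vecMul (concatVec l i hi u β v) K)
        = Set.range (fun v : Fin (l - i - 1) → ZMod 2 =>
          corr l a b (Matrix.vecMul (concatVec l i hi u β v) K)) := by
      rw [← Set.range_comp]; rfl
    rw [h1]
    rw [← Set.image_univ, ← Finset.coe_univ,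
      ← Finset.sup'_eq_csSup_image _ Finset.univ_nonempty]
    simp_rw [my_llSum_eq]
    exact my_sup'_div_add _ _ _ _
  rw [key 0, key 1]
  ring
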